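/- Additivity of the 3-degree integrand: for smooth maps σ₀, σ₁ : ℝ³ → GL(m,ℂ), Tr([(σ₀σ₁)⁻¹ d(σ₀σ₁)]^{∧3}) = Tr([σ₀⁻¹ dσ₀]^{∧3}) + Tr([σ₁⁻¹ dσ₁]^{∧3}) − 3 d[ Tr(σ₀⁻¹ dσ₀ ∧ dσ₁ σ₁⁻¹) ]. -/

import Mathlib

open scoped BigOperators
open Real

noncomputable section

attribute [local instance] Matrix.normedAddCommGroup Matrix.normedSpace

/-- Points of ℝ^d. -/
abbrev Pt (d : ℕ) := Fin d → ℝ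

/-- Coefficient representation of an `R`-valued differential `p`-form on ℝ^d:
to each point and each `p`-tuple of coordinate directions it assigns a value in `R`. -/
abbrev Form (d : ℕ) (R : Type*) (p : ℕ) := Pt d → (Fin p → Fin d) → R

variable {d p q : ℕ} {R : Type*} [NormedAddCommGroup R] [NormedSpace ℂ R] [Mul R]

/-- Wedge product of (matrix-valued) forms in coefficient representation. -/
def wedge (ω : Form d R p) (η : Form d R q) : Form d R (p + q) :=
  fun x I =>
    (((p.factorial : ℂ) * (q.factorial : ℂ))⁻¹) •
      ∑ σ : Equiv.Perm (Fin (p + q)),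
        ((Equiv.Perm.sign σ : ℤ) •
          (ω x (fun i => I (σ (Fin.castAdd q i))) *
           η x (fun j => I (σ (Fin.natAdd p j)))))

/-- Exterior differential in coefficient representation. -/
def extDer (ω : Form d R p) : Form d R (p + 1) :=
  fun x I =>
    ∑ j : Fin (p + 1),
      ((-1 : ℤ) ^ (j : ℕ)) •
        fderiv ℝ (fun y => ω y (fun i => I (j.succAbove i))) x (Pi.single (I j) 1)

/-- A form is smooth if each coefficient function is `C^∞`. -/
def SmoothF (ω : Form d R p) : Prop := ∀ I, ContDiff ℝ (⊤ : ℕ∞) fun x => ω x I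

/-- The coefficients of a form are totally antisymmetric in the indices. -/
def IsAlt (ω : Form d R p) : Prop :=
  ∀ x (I : Fin p → Fin d) (σ : Equiv.Perm (Fin p)),
    ω x (fun i => I (σ i)) = (Equiv.Perm.sign σ : ℤ) • ω x I

/-- Matrix trace applied to the coefficients of a matrix-valued form. -/
def traceF {n : Type*} [Fintype n] (ω : Form d (Matrix n n ℂ) p) : Form d ℂ p :=
  fun x I => (ω x I).trace

/-- The differential of a (matrix-valued) function, viewed as a 1-form. -/
def dzero (σ : Pt d → R) : Form d R 1 := extDer (p := 0) (fun x _ => σ x)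

/-- Left multiplication of a form by a matrix-valued function (0-form). -/
def lmul (g : Pt d → R) (ω : Form d R p) : Form d R p := fun x I => g x * ω x I

/-- Right multiplication of a form by a matrix-valued function (0-form). -/
def rmul (ω : Form d R p) (g : Pt d → R) : Form d R p := fun x I => ω x I * g x

/-- The Maurer–Cartan 1-form `σ⁻¹ dσ`. -/
def mc {m : ℕ} (σ : Pt d → Matrix (Fin m) (Fin m) ℂ) : Form d (Matrix (Fin m) (Fin m) ℂ) 1 :=
  lmul (fun x => (σ x)⁻¹) (dzero σ)

/-- The triple wedge power of a 1-form. -/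
def w3 (ω : Form d R 1) : Form d R 3 := wedge ω (wedge ω ω)

/-! ### Auxiliary analytic toolkit -/

namespace PW

variable {m : ℕ} {E : Type*} [NormedAddCommGroup E] [NormedSpace ℝ E]
local notation "M" => Matrix (Fin m) (Fin m) ℂ

def mulL (m : ℕ) : Matrix (Fin m) (Fin m) ℂ →L[ℝ] Matrix (Fin m) (Fin m) ℂ →L[ℝ] Matrix (Fin m) (Fin m) ℂ :=
  LinearMap.toContinuousLinearMap
    ((LinearMap.toContinuousLinearMap :
        (Matrix (Fin m) (Fin m) ℂ →ₗ[ℝ] Matrix (Fin m) (Fin m) ℂ) ≃ₗ[ℝ] _).toLinearMap ∘ₗ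
      (LinearMap.mul ℝ (Matrix (Fin m) (Fin m) ℂ)))

@[simp] lemma mulL_apply (a b : M) : mulL m a b = a * b := rfl

lemma contDiff_entry {n : WithTop ℕ∞} {f : E → M} (hf : ContDiff ℝ n f) (i j : Fin m) :
    ContDiff ℝ n fun x => f x i j :=
  (contDiff_pi.1 ((contDiff_pi.1 hf) i)) j

lemma contDiff_matrix {n : WithTop ℕ∞} {f : E → M} (hf : ∀ i j, ContDiff ℝ n fun x => f x i j) :
    ContDiff ℝ n f :=
  contDiff_pi.2 fun i => contDiff_pi.2 fun j => hf i j

lemma ContDiff.matmul {n : WithTop ℕ∞} {f g : E → M} (hf : ContDiff ℝ n f) (hg : ContDiff ℝ n g) :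
    ContDiff ℝ n fun x => f x * g x :=
  ((mulL m).isBoundedBilinearMap.contDiff.of_le le_top).comp (hf.prodMk hg)

lemma hasFDerivAt_matmul {f g : E → M} {f' g' : E →L[ℝ] M} {x : E}
    (hf : HasFDerivAt f f' x) (hg : HasFDerivAt g g' x) :
    HasFDerivAt (fun y => f y * g y)
      (((mulL m).isBoundedBilinearMap.deriv (f x, g x)).comp (f'.prod g')) x :=
  by have h := ((mulL m).isBoundedBilinearMap.hasFDerivAt (f x, g x)).comp x (hf.prodMk hg); exact h

lemma fderiv_matmul {f g : E → M} {x : E} (hf : DifferentiableAt ℝ f x)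
    (hg : DifferentiableAt ℝ g x) (v : E) :
    fderiv ℝ (fun y => f y * g y) x v = fderiv ℝ f x v * g x + f x * fderiv ℝ g x v := by
  rw [show fderiv ℝ (fun y => f y * g y) x = _ from (hasFDerivAt_matmul hf.hasFDerivAt hg.hasFDerivAt).fderiv]
  simp [IsBoundedBilinearMap.deriv_apply, add_comm]
  rfl

lemma differentiableAt_matmul {f g : E → M} {x : E} (hf : DifferentiableAt ℝ f x)
    (hg : DifferentiableAt ℝ g x) : DifferentiableAt ℝ (fun y => f y * g y) x :=
  (hasFDerivAt_matmul hf.hasFDerivAt hg.hasFDerivAt).differentiableAt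

def traceL (m : ℕ) : Matrix (Fin m) (Fin m) ℂ →L[ℝ] ℂ :=
  LinearMap.toContinuousLinearMap ((Matrix.traceLinearMap (Fin m) ℂ ℂ).restrictScalars ℝ)

@[simp] lemma traceL_apply (a : M) : traceL m a = a.trace := rfl

lemma fderiv_trace {f : E → M} {x : E} (hf : DifferentiableAt ℝ f x) (v : E) :
    fderiv ℝ (fun y => (f y).trace) x v = (fderiv ℝ f x v).trace := by
  rw [show (fun y => (f y).trace) = (traceL m) ∘ f from rfl,
    fderiv_comp x (traceL m).differentiableAt hf]
  erw [(traceL m).fderiv]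
  rfl

lemma ContDiff.traceF' {n : WithTop ℕ∞} {f : E → M} (hf : ContDiff ℝ n f) :
    ContDiff ℝ n fun x => (f x).trace :=
  ((traceL m).contDiff.of_le le_top).comp hf

lemma contDiff_det {n : WithTop ℕ∞} {f : E → M} (hf : ContDiff ℝ n f) :
    ContDiff ℝ n fun x => (f x).det := by
  have : (fun x => (f x).det) =
      fun x => ∑ σ : Equiv.Perm (Fin m),
        ((Equiv.Perm.sign σ : ℤ) : ℂ) * ∏ i, f x (σ i) i := by
    funext x; rw [Matrix.det_apply']
  rw [this]
  refine ContDiff.sum fun σ _ => ContDiff.mul contDiff_const ?_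
  exact contDiff_prod fun i _ => contDiff_entry hf (σ i) i

lemma contDiff_adjugate {n : WithTop ℕ∞} {f : E → M} (hf : ContDiff ℝ n f) :
    ContDiff ℝ n fun x => (f x).adjugate := by
  refine contDiff_matrix fun i j => ?_
  have : (fun x => (f x).adjugate i j) =
      fun x => ((f x).updateRow j (Pi.single i 1)).det := by
    funext x; rw [Matrix.adjugate_apply]
  rw [this]
  refine contDiff_det (contDiff_matrix fun k l => ?_)
  rcases eq_or_ne k j with rfl | hk
  · simpa [Matrix.updateRow_self] using contDiff_const
  · simpa [Matrix.updateRow_ne hk] using contDiff_entry hf k l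

lemma contDiff_inv' {n : WithTop ℕ∞} {f : E → M} (hf : ContDiff ℝ n f)
    (hu : ∀ x, IsUnit (f x)) : ContDiff ℝ n fun x => (f x)⁻¹ := by
  have hdet : ∀ x, (f x).det ≠ 0 := fun x =>
    (Matrix.isUnit_iff_isUnit_det _ |>.1 (hu x)).ne_zero
  refine contDiff_matrix fun i j => ?_
  have : (fun x => (f x)⁻¹ i j) = fun x => ((f x).det)⁻¹ * (f x).adjugate i j := by
    funext x; rw [Matrix.inv_def, Ring.inverse_eq_inv']; rfl
  rw [this]
  exact ContDiff.mul ((contDiff_det hf).inv hdet) (contDiff_entry (contDiff_adjugate hf) i j)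

lemma fderiv_inv' {f : E → M} {x : E} (hdiff : DifferentiableAt ℝ f x)
    (hdinv : DifferentiableAt ℝ (fun y => (f y)⁻¹) x)
    (hu : ∀ y, IsUnit (f y)) (v : E) :
    fderiv ℝ (fun y => (f y)⁻¹) x v = -((f x)⁻¹ * fderiv ℝ f x v * (f x)⁻¹) := by
  have hud : ∀ y, IsUnit (f y).det := fun y => (Matrix.isUnit_iff_isUnit_det _).1 (hu y)
  have hconst : (fun y => f y * (f y)⁻¹) = fun _ => (1 : M) := by
    funext y; exact Matrix.mul_nonsing_inv _ (hud y)
  have h0 : fderiv ℝ (fun y => f y * (f y)⁻¹) x v = 0 := by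
    rw [hconst]; simp
  rw [fderiv_matmul hdiff hdinv v] at h0
  have h2 : (f x)⁻¹ * f x = 1 := Matrix.nonsing_inv_mul _ (hud x)
  have := congrArg (fun z => (f x)⁻¹ * z) h0
  simp only [mul_add, mul_zero] at this
  rw [← mul_assoc, ← mul_assoc, h2, one_mul] at this
  linear_combination (norm := noncomm_ring) this

end PW
namespace PW

variable {m : ℕ}
local notation "M" => Matrix (Fin m) (Fin m) ℂ

def sgnC (σ : Equiv.Perm (Fin 3)) : ℂ := ((Equiv.Perm.sign σ : ℤ) : ℂ)

lemma sgnC_mul (σ τ : Equiv.Perm (Fin 3)) : sgnC (σ * τ) = sgnC σ * sgnC τ := by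
  simp [sgnC]

def S3 (u v w : Fin 3 → M) (I : Fin 3 → Fin 3) : ℂ :=
  ∑ σ : Equiv.Perm (Fin 3), sgnC σ * (u (I (σ 0)) * v (I (σ 1)) * w (I (σ 2))).trace

lemma sum_comp_right (τ : Equiv.Perm (Fin 3)) (F : Equiv.Perm (Fin 3) → ℂ) :
    ∑ σ : Equiv.Perm (Fin 3), F (σ * τ) = ∑ σ : Equiv.Perm (Fin 3), F σ :=
  Equiv.sum_comp (Equiv.mulRight τ) F

def c3 : Equiv.Perm (Fin 3) := finRotate 3

lemma c3_vals : c3 0 = 1 ∧ c3 1 = 2 ∧ c3 2 = 0 := by decide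
lemma sgnC_c3 : sgnC c3 = 1 := by
  have : Equiv.Perm.sign c3 = 1 := by decide
  simp [sgnC, this]

lemma S3_cyc (u v w : Fin 3 → M) (I : Fin 3 → Fin 3) : S3 u v w I = S3 v w u I := by
  rw [S3, S3,
    ← sum_comp_right c3 (fun σ => sgnC σ * (v (I (σ 0)) * w (I (σ 1)) * u (I (σ 2))).trace)]
  refine Finset.sum_congr rfl fun σ _ => ?_
  rw [sgnC_mul, sgnC_c3, mul_one]
  simp only [Equiv.Perm.mul_apply, c3_vals.1, c3_vals.2.1, c3_vals.2.2]
  congr 1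
  rw [mul_assoc, Matrix.trace_mul_comm]

lemma sign_swap01 : sgnC (Equiv.swap (0 : Fin 3) 1) = -1 := by
  have : Equiv.Perm.sign (Equiv.swap (0 : Fin 3) 1) = -1 := by decide
  simp [sgnC, this]

lemma sign_swap02 : sgnC (Equiv.swap (0 : Fin 3) 2) = -1 := by
  have : Equiv.Perm.sign (Equiv.swap (0 : Fin 3) 2) = -1 := by decide
  simp [sgnC, this]

lemma cancel_sym₁ (s : Fin 3 → Fin 3 → M) (w : Fin 3 → M) (I : Fin 3 → Fin 3)
    (hs : ∀ p q, s p q = s q p) :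
    ∑ σ : Equiv.Perm (Fin 3), sgnC σ * (s (I (σ 0)) (I (σ 1)) * w (I (σ 2))).trace = 0 := by
  set F := fun σ : Equiv.Perm (Fin 3) => sgnC σ * (s (I (σ 0)) (I (σ 1)) * w (I (σ 2))).trace
    with hF
  have key : ∀ σ, F (σ * Equiv.swap 0 1) = -F σ := by
    intro σ
    simp only [hF, sgnC_mul, sign_swap01, Equiv.Perm.mul_apply, Equiv.swap_apply_left,
      Equiv.swap_apply_right, Equiv.swap_apply_of_ne_of_ne (by decide : (2:Fin 3) ≠ 0)
        (by decide : (2:Fin 3) ≠ 1)]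
    rw [hs (I (σ 1)) (I (σ 0))]
    ring
  have h2 : ∑ σ : Equiv.Perm (Fin 3), F σ = -∑ σ : Equiv.Perm (Fin 3), F σ := by
    conv_lhs => rw [← sum_comp_right (Equiv.swap 0 1) F]
    rw [Finset.sum_congr rfl fun σ _ => key σ, Finset.sum_neg_distrib]
  exact add_self_eq_zero.1 (eq_neg_iff_add_eq_zero.1 h2)

lemma cancel_sym₂ (t : Fin 3 → Fin 3 → M) (u : Fin 3 → M) (I : Fin 3 → Fin 3)
    (ht : ∀ p q, t p q = t q p) :
    ∑ σ : Equiv.Perm (Fin 3), sgnC σ * (u (I (σ 1)) * t (I (σ 0)) (I (σ 2))).trace = 0 := by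
  set F := fun σ : Equiv.Perm (Fin 3) => sgnC σ * (u (I (σ 1)) * t (I (σ 0)) (I (σ 2))).trace
    with hF
  have key : ∀ σ, F (σ * Equiv.swap 0 2) = -F σ := by
    intro σ
    simp only [hF, sgnC_mul, sign_swap02, Equiv.Perm.mul_apply, Equiv.swap_apply_left,
      Equiv.swap_apply_right, Equiv.swap_apply_of_ne_of_ne (by decide : (1:Fin 3) ≠ 0)
        (by decide : (1:Fin 3) ≠ 2)]
    rw [ht (I (σ 2)) (I (σ 0))]
    ring
  have h2 : ∑ σ : Equiv.Perm (Fin 3), F σ = -∑ σ : Equiv.Perm (Fin 3), F σ := by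
    conv_lhs => rw [← sum_comp_right (Equiv.swap 0 2) F]
    rw [Finset.sum_congr rfl fun σ _ => key σ, Finset.sum_neg_distrib]
  exact add_self_eq_zero.1 (eq_neg_iff_add_eq_zero.1 h2)

lemma S3_add₁ (u u' v w : Fin 3 → M) (I : Fin 3 → Fin 3) :
    S3 (fun i => u i + u' i) v w I = S3 u v w I + S3 u' v w I := by
  simp only [S3, ← Finset.sum_add_distrib]
  refine Finset.sum_congr rfl fun σ _ => ?_
  rw [add_mul, add_mul, Matrix.trace_add]; ring

lemma S3_add₂ (u v v' w : Fin 3 → M) (I : Fin 3 → Fin 3) :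
    S3 u (fun i => v i + v' i) w I = S3 u v w I + S3 u v' w I := by
  simp only [S3, ← Finset.sum_add_distrib]
  refine Finset.sum_congr rfl fun σ _ => ?_
  rw [mul_add, add_mul, Matrix.trace_add]; ring

lemma S3_add₃ (u v w w' : Fin 3 → M) (I : Fin 3 → Fin 3) :
    S3 u v (fun i => w i + w' i) I = S3 u v w I + S3 u v w' I := by
  simp only [S3, ← Finset.sum_add_distrib]
  refine Finset.sum_congr rfl fun σ _ => ?_
  rw [mul_add, Matrix.trace_add]; ring

lemma S3_expand_add (a b : Fin 3 → M) (I : Fin 3 → Fin 3) :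
    S3 (fun i => a i + b i) (fun i => a i + b i) (fun i => a i + b i) I =
      S3 a a a I + S3 b b b I + 3 * S3 a a b I + 3 * S3 a b b I := by
  rw [S3_add₁, S3_add₂, S3_add₂, S3_add₃, S3_add₃, S3_add₃, S3_add₃]
  have e1 : S3 a b a I = S3 a a b I := by rw [S3_cyc a b a, S3_cyc b a a]
  have e2 : S3 b a a I = S3 a a b I := by rw [S3_cyc b a a]
  have e3 : S3 b a b I = S3 a b b I := by rw [S3_cyc b a b]
  have e4 : S3 b b a I = S3 a b b I := by rw [S3_cyc b b a, S3_cyc b a b]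
  rw [e1, e2, e3, e4]; ring

end PW
namespace PW

variable {m : ℕ}
local notation "M" => Matrix (Fin m) (Fin m) ℂ

lemma dzero_apply (σ : Pt 3 → M) (x : Pt 3) (f : Fin 1 → Fin 3) :
    dzero σ x f = fderiv ℝ σ x (Pi.single (f 0) 1) := by
  simp [dzero, extDer]
  rfl

lemma mc_apply (σ : Pt 3 → M) (x : Pt 3) (f : Fin 1 → Fin 3) :
    mc σ x f = (σ x)⁻¹ * fderiv ℝ σ x (Pi.single (f 0) 1) := by
  rw [mc, lmul, dzero_apply]

lemma form1_arg (ω : Form 3 M 1) (x : Pt 3) (f : Fin 1 → Fin 3) :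
    ω x f = ω x (fun _ => f 0) := by
  have hf : f = fun _ => f 0 := funext fun i => by rw [Subsingleton.elim i 0]
  conv_lhs => rw [hf]

lemma wedge11 (ω η : Form 3 M 1) (x : Pt 3) (J : Fin 2 → Fin 3) :
    wedge ω η x J =
      ω x (fun _ => J 0) * η x (fun _ => J 1) - ω x (fun _ => J 1) * η x (fun _ => J 0) := by
  rw [wedge]
  rw [show (Finset.univ : Finset (Equiv.Perm (Fin 2))) = {1, Equiv.swap 0 1} from by decide]
  rw [Finset.sum_insert (by decide), Finset.sum_singleton]
  have e1 : (fun i : Fin 1 => J ((1 : Equiv.Perm (Fin 2)) (Fin.castAdd 1 i))) = fun _ => J 0 := by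
    funext i; rw [Subsingleton.elim i 0]; rfl
  have e2 : (fun i : Fin 1 => J ((1 : Equiv.Perm (Fin 2)) (Fin.natAdd 1 i))) = fun _ => J 1 := by
    funext i; rw [Subsingleton.elim i 0]; rfl
  have e3 : (fun i : Fin 1 => J ((Equiv.swap 0 1 : Equiv.Perm (Fin 2)) (Fin.castAdd 1 i)))
      = fun _ => J 1 := by
    funext i; rw [Subsingleton.elim i 0]
    congr 1
  have e4 : (fun i : Fin 1 => J ((Equiv.swap 0 1 : Equiv.Perm (Fin 2)) (Fin.natAdd 1 i)))
      = fun _ => J 0 := by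
    funext i; rw [Subsingleton.elim i 0]
    congr 1
  rw [e1, e2, e3, e4]
  have s1 : Equiv.Perm.sign (1 : Equiv.Perm (Fin 2)) = 1 := by decide
  have s2 : Equiv.Perm.sign (Equiv.swap (0 : Fin 2) 1) = -1 := by decide
  rw [s1, s2]
  norm_num
  rw [sub_eq_add_neg]

lemma traceF_w3 (ω : Form 3 M 1) (x : Pt 3) (I : Fin 3 → Fin 3) :
    traceF (w3 ω) x I = S3 (fun i => ω x (fun _ => i)) (fun i => ω x (fun _ => i))
      (fun i => ω x (fun _ => i)) I := by
  set g : Fin 3 → M := fun i => ω x (fun _ => i) with hg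
  have hw : ∀ σ : Equiv.Perm (Fin 3),
      (ω x (fun i => I (σ (Fin.castAdd 2 i))) *
        wedge ω ω x (fun j => I (σ (Fin.natAdd 1 j)))) =
      g (I (σ 0)) * (g (I (σ 1)) * g (I (σ 2)) - g (I (σ 2)) * g (I (σ 1))) := by
    intro σ
    rw [wedge11]
    rw [form1_arg ω x (fun i => I (σ (Fin.castAdd 2 i)))]
    rfl
  rw [w3, traceF]
  rw [show wedge ω (wedge ω ω) x I = (((Nat.factorial 1 : ℂ) * (Nat.factorial 2 : ℂ))⁻¹) •
      ∑ σ : Equiv.Perm (Fin 3), ((Equiv.Perm.sign σ : ℤ) •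
        (ω x (fun i => I (σ (Fin.castAdd 2 i))) *
         wedge ω ω x (fun j => I (σ (Fin.natAdd 1 j))))) from by rw [wedge]]
  rw [Finset.sum_congr rfl fun σ _ => by rw [hw σ]]
  rw [Matrix.trace_smul, Matrix.trace_sum]
  have : ∀ σ : Equiv.Perm (Fin 3),
      ((Equiv.Perm.sign σ : ℤ) •
        (g (I (σ 0)) * (g (I (σ 1)) * g (I (σ 2)) - g (I (σ 2)) * g (I (σ 1))))).trace
      = sgnC σ * (g (I (σ 0)) * g (I (σ 1)) * g (I (σ 2))).trace
        - sgnC σ * (g (I (σ 0)) * g (I (σ 2)) * g (I (σ 1))).trace := by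
    intro σ
    rw [mul_sub, ← mul_assoc, ← mul_assoc, Matrix.trace_smul, Matrix.trace_sub, smul_sub]
    simp only [zsmul_eq_mul, sgnC]
  rw [Finset.sum_congr rfl fun σ _ => this σ]
  rw [Finset.sum_sub_distrib]
  have hrev : ∑ σ : Equiv.Perm (Fin 3), sgnC σ * (g (I (σ 0)) * g (I (σ 2)) * g (I (σ 1))).trace
      = -∑ σ : Equiv.Perm (Fin 3), sgnC σ * (g (I (σ 0)) * g (I (σ 1)) * g (I (σ 2))).trace := by
    rw [← sum_comp_right (Equiv.swap 1 2)
      (fun σ => sgnC σ * (g (I (σ 0)) * g (I (σ 1)) * g (I (σ 2))).trace),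
      ← Finset.sum_neg_distrib]
    refine Finset.sum_congr rfl fun σ _ => ?_
    have hsw : sgnC (Equiv.swap (1 : Fin 3) 2) = -1 := by
      have : Equiv.Perm.sign (Equiv.swap (1 : Fin 3) 2) = -1 := by decide
      simp [sgnC, this]
    simp only [sgnC_mul, hsw, Equiv.Perm.mul_apply, Equiv.swap_apply_left, Equiv.swap_apply_right,
      Equiv.swap_apply_of_ne_of_ne (by decide : (0:Fin 3) ≠ 1) (by decide : (0:Fin 3) ≠ 2)]
    ring
  rw [hrev, S3]
  norm_num
  ring
end PW

namespace PW
open scoped ContDiff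

variable {m : ℕ}
local notation "M" => Matrix (Fin m) (Fin m) ℂ

lemma perm3_univ : (Finset.univ : Finset (Equiv.Perm (Fin 3))) =
    {1, Equiv.swap 0 1, Equiv.swap 0 2, Equiv.swap 1 2, c3, c3 * c3} := by decide

lemma sum3_alt (G : Fin 3 → Fin 3 → Fin 3 → ℂ) (I : Fin 3 → Fin 3) :
    ∑ j : Fin 3, ((-1:ℤ)^(j:ℕ)) • (G (I j) (I (j.succAbove 0)) (I (j.succAbove 1))
        - G (I j) (I (j.succAbove 1)) (I (j.succAbove 0)))
      = ∑ σ : Equiv.Perm (Fin 3), sgnC σ * G (I (σ 0)) (I (σ 1)) (I (σ 2)) := by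
  rw [perm3_univ]
  rw [Finset.sum_insert (by decide), Finset.sum_insert (by decide),
    Finset.sum_insert (by decide), Finset.sum_insert (by decide),
    Finset.sum_insert (by decide), Finset.sum_singleton]
  rw [Fin.sum_univ_three]
  have v1 : (1 : Equiv.Perm (Fin 3)) 0 = 0 ∧ (1 : Equiv.Perm (Fin 3)) 1 = 1 ∧
      (1 : Equiv.Perm (Fin 3)) 2 = 2 := by decide
  have v2 : (Equiv.swap (0:Fin 3) 1) 0 = 1 ∧ (Equiv.swap (0:Fin 3) 1) 1 = 0 ∧
      (Equiv.swap (0:Fin 3) 1) 2 = 2 := by decide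
  have v3 : (Equiv.swap (0:Fin 3) 2) 0 = 2 ∧ (Equiv.swap (0:Fin 3) 2) 1 = 1 ∧
      (Equiv.swap (0:Fin 3) 2) 2 = 0 := by decide
  have v4 : (Equiv.swap (1:Fin 3) 2) 0 = 0 ∧ (Equiv.swap (1:Fin 3) 2) 1 = 2 ∧
      (Equiv.swap (1:Fin 3) 2) 2 = 1 := by decide
  have v5 : c3 0 = 1 ∧ c3 1 = 2 ∧ c3 2 = 0 := c3_vals
  have v6 : (c3 * c3) 0 = 2 ∧ (c3 * c3) 1 = 0 ∧ (c3 * c3) 2 = 1 := by decide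
  have s1 : sgnC (1 : Equiv.Perm (Fin 3)) = 1 := by simp [sgnC]
  have s4 : sgnC (Equiv.swap (1:Fin 3) 2) = -1 := by
    have : Equiv.Perm.sign (Equiv.swap (1 : Fin 3) 2) = -1 := by decide
    simp [sgnC, this]
  have s6 : sgnC (c3 * c3) = 1 := by rw [sgnC_mul, sgnC_c3]; norm_num
  have w0 : (0:Fin 3).succAbove 0 = 1 ∧ (0:Fin 3).succAbove 1 = 2 := by decide
  have w1 : (1:Fin 3).succAbove 0 = 0 ∧ (1:Fin 3).succAbove 1 = 2 := by decide
  have w2 : (2:Fin 3).succAbove 0 = 0 ∧ (2:Fin 3).succAbove 1 = 1 := by decide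
  rw [v1.1, v1.2.1, v1.2.2, v2.1, v2.2.1, v2.2.2, v3.1, v3.2.1, v3.2.2,
    v4.1, v4.2.1, v4.2.2, v5.1, v5.2.1, v5.2.2, v6.1, v6.2.1, v6.2.2,
    s1, sign_swap01, sign_swap02, s4, sgnC_c3, s6,
    w0.1, w0.2, w1.1, w1.2, w2.1, w2.2]
  simp only [zsmul_eq_mul, Fin.val_zero, Fin.val_one, Fin.val_two, Fin.isValue]
  push_cast
  ring

end PW

namespace PW
open scoped ContDiff

variable {m : ℕ}
local notation "M" => Matrix (Fin m) (Fin m) ℂ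

section ctx

variable (σ₀ σ₁ : Pt 3 → Matrix (Fin m) (Fin m) ℂ)

/-- `σ₀⁻¹ ∂ₚσ₀`. -/
def Af (p : Fin 3) : Pt 3 → Matrix (Fin m) (Fin m) ℂ :=
  fun y => (σ₀ y)⁻¹ * fderiv ℝ σ₀ y (Pi.single p 1)

/-- `(∂_q σ₁) σ₁⁻¹`. -/
def Bf (q : Fin 3) : Pt 3 → Matrix (Fin m) (Fin m) ℂ :=
  fun y => fderiv ℝ σ₁ y (Pi.single q 1) * (σ₁ y)⁻¹

variable {σ₀ σ₁}

lemma contDiff_pd (h₀ : ContDiff ℝ (⊤ : ℕ∞) σ₀) (p : Fin 3) : ContDiff ℝ ((⊤ : ℕ∞) : WithTop ℕ∞) fun y => fderiv ℝ σ₀ y (Pi.single p 1) :=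
  ContDiff.clm_apply (h₀.fderiv_right (by simp)) contDiff_const

lemma contDiff_iv (h₀ : ContDiff ℝ (⊤ : ℕ∞) σ₀) (hi₀ : ∀ x, IsUnit (σ₀ x)) : ContDiff ℝ ((⊤ : ℕ∞) : WithTop ℕ∞) fun y => (σ₀ y)⁻¹ :=
  contDiff_inv' (h₀.of_le (by simp)) hi₀

lemma contDiff_Af (h₀ : ContDiff ℝ (⊤ : ℕ∞) σ₀) (hi₀ : ∀ x, IsUnit (σ₀ x)) (p : Fin 3) : ContDiff ℝ ((⊤ : ℕ∞) : WithTop ℕ∞) (Af σ₀ p) :=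
  ContDiff.matmul (contDiff_iv h₀ hi₀) (contDiff_pd h₀ p)

lemma contDiff_Bf (h₁ : ContDiff ℝ (⊤ : ℕ∞) σ₁) (hi₁ : ∀ x, IsUnit (σ₁ x)) (q : Fin 3) : ContDiff ℝ ((⊤ : ℕ∞) : WithTop ℕ∞) (Bf σ₁ q) :=
  ContDiff.matmul (contDiff_pd h₁ q) (contDiff_iv h₁ hi₁)

lemma fderiv_clm_apply_const {F : Pt 3 → (Pt 3 →L[ℝ] Matrix (Fin m) (Fin m) ℂ)} {x : Pt 3}
    (hF : DifferentiableAt ℝ F x) (v w : Pt 3) :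
    fderiv ℝ (fun y => F y v) x w = (fderiv ℝ F x w) v := by
  rw [show fderiv ℝ (fun y => F y v) x = _ from
    ((ContinuousLinearMap.apply ℝ (Matrix (Fin m) (Fin m) ℂ) v).hasFDerivAt.comp x hF.hasFDerivAt).fderiv]
  rfl

lemma snd_symm (h₀ : ContDiff ℝ (⊤ : ℕ∞) σ₀) (p r : Fin 3) (x : Pt 3) :
    fderiv ℝ (fun y => fderiv ℝ σ₀ y (Pi.single p 1)) x (Pi.single r 1) =
      fderiv ℝ (fun y => fderiv ℝ σ₀ y (Pi.single r 1)) x (Pi.single p 1) := by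
  have hdF : DifferentiableAt ℝ (fderiv ℝ σ₀) x :=
    ((h₀.fderiv_right (m := 1) (WithTop.coe_le_coe.2 le_top)).differentiable one_ne_zero).differentiableAt
  rw [fderiv_clm_apply_const hdF, fderiv_clm_apply_const hdF]
  exact (h₀.contDiffAt.isSymmSndFDerivAt (by rw [minSmoothness_of_isRCLikeNormedField]; exact WithTop.coe_le_coe.2 le_top)) _ _

lemma fderiv_iv (h₀ : ContDiff ℝ (⊤ : ℕ∞) σ₀) (hi₀ : ∀ x, IsUnit (σ₀ x)) (x : Pt 3) (v : Pt 3) :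
    fderiv ℝ (fun y => (σ₀ y)⁻¹) x v = -((σ₀ x)⁻¹ * fderiv ℝ σ₀ x v * (σ₀ x)⁻¹) :=
  fderiv_inv' ((h₀.of_le (by simp)).differentiable one_ne_zero).differentiableAt
    (((contDiff_iv h₀ hi₀).differentiable (by simp)).differentiableAt) hi₀ v

lemma fderiv_Af (h₀ : ContDiff ℝ (⊤ : ℕ∞) σ₀) (hi₀ : ∀ x, IsUnit (σ₀ x)) (p r : Fin 3) (x : Pt 3) :
    fderiv ℝ (Af σ₀ p) x (Pi.single r 1) =
      -(Af σ₀ r x * Af σ₀ p x) +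
        (σ₀ x)⁻¹ * fderiv ℝ (fun y => fderiv ℝ σ₀ y (Pi.single p 1)) x (Pi.single r 1) := by
  rw [show Af σ₀ p = fun y => (fun z => (σ₀ z)⁻¹) y * (fun z => fderiv ℝ σ₀ z (Pi.single p 1)) y
    from rfl]
  rw [fderiv_matmul (((contDiff_iv h₀ hi₀).differentiable (by simp)).differentiableAt)
    (((contDiff_pd h₀ p).differentiable (by simp)).differentiableAt)]
  rw [fderiv_iv h₀ hi₀]
  simp only [Af]
  noncomm_ring

lemma fderiv_Bf (h₁ : ContDiff ℝ (⊤ : ℕ∞) σ₁) (hi₁ : ∀ x, IsUnit (σ₁ x)) (q r : Fin 3) (x : Pt 3) :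
    fderiv ℝ (Bf σ₁ q) x (Pi.single r 1) =
      fderiv ℝ (fun y => fderiv ℝ σ₁ y (Pi.single q 1)) x (Pi.single r 1) * (σ₁ x)⁻¹
        - Bf σ₁ q x * Bf σ₁ r x := by
  rw [show Bf σ₁ q = fun y => (fun z => fderiv ℝ σ₁ z (Pi.single q 1)) y * (fun z => (σ₁ z)⁻¹) y
    from rfl]
  rw [fderiv_matmul (((contDiff_pd h₁ q).differentiable (by simp)).differentiableAt)
    (((contDiff_iv h₁ hi₁).differentiable (by simp)).differentiableAt)]
  rw [fderiv_iv h₁ hi₁]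
  simp only [Bf]
  noncomm_ring

lemma fderiv_trace_AB (h₀ : ContDiff ℝ (⊤ : ℕ∞) σ₀) (hi₀ : ∀ x, IsUnit (σ₀ x)) (h₁ : ContDiff ℝ (⊤ : ℕ∞) σ₁) (hi₁ : ∀ x, IsUnit (σ₁ x)) (p q r : Fin 3) (x : Pt 3) :
    fderiv ℝ (fun y => (Af σ₀ p y * Bf σ₁ q y).trace) x (Pi.single r 1) =
      ((-(Af σ₀ r x * Af σ₀ p x) +
          (σ₀ x)⁻¹ * fderiv ℝ (fun y => fderiv ℝ σ₀ y (Pi.single p 1)) x (Pi.single r 1))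
        * Bf σ₁ q x).trace +
      (Af σ₀ p x *
        (fderiv ℝ (fun y => fderiv ℝ σ₁ y (Pi.single q 1)) x (Pi.single r 1) * (σ₁ x)⁻¹
          - Bf σ₁ q x * Bf σ₁ r x)).trace := by
  have hA := ((contDiff_Af h₀ hi₀ p).differentiable (by simp)).differentiableAt (x := x)
  have hB := ((contDiff_Bf h₁ hi₁ q).differentiable (by simp)).differentiableAt (x := x)
  rw [fderiv_trace (differentiableAt_matmul hA hB), fderiv_matmul hA hB, Matrix.trace_add,
    fderiv_Af h₀ hi₀, fderiv_Bf h₁ hi₁]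

end ctx

end PW
namespace PW
open scoped ContDiff

variable {m : ℕ}
local notation "M" => Matrix (Fin m) (Fin m) ℂ

lemma conj_collapse {u : M} (h1 : u * u⁻¹ = 1) (X Y Z : M) :
    (u⁻¹ * X * u) * (u⁻¹ * Y * u) * (u⁻¹ * Z * u) = u⁻¹ * (X * (Y * (Z * u))) := by
  have key : ∀ W : M, u * (u⁻¹ * W) = W := fun W => by rw [← mul_assoc, h1, one_mul]
  simp only [mul_assoc, key]

lemma trace_conj3 {u : M} (h1 : u * u⁻¹ = 1) (X Y Z : M) :
    ((u⁻¹ * X * u) * (u⁻¹ * Y * u) * (u⁻¹ * Z * u)).trace = (X * Y * Z).trace := by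
  rw [conj_collapse h1, Matrix.trace_mul_comm]
  simp only [mul_assoc]
  rw [h1, mul_one]

lemma S3_conj {u : M} (h1 : u * u⁻¹ = 1) (f g h : Fin 3 → M) (I : Fin 3 → Fin 3) :
    S3 (fun i => u⁻¹ * f i * u) (fun i => u⁻¹ * g i * u) (fun i => u⁻¹ * h i * u) I
      = S3 f g h I := by
  refine Finset.sum_congr rfl fun σ _ => ?_
  rw [trace_conj3 h1]

section ctx2

variable {σ₀ σ₁ : Pt 3 → Matrix (Fin m) (Fin m) ℂ}

lemma eta_eq (h₀ : ContDiff ℝ (⊤ : ℕ∞) σ₀) (h₁ : ContDiff ℝ (⊤ : ℕ∞) σ₁) (y : Pt 3) (J : Fin 2 → Fin 3) :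
    traceF (wedge (mc σ₀) (rmul (dzero σ₁) (fun z => (σ₁ z)⁻¹))) y J =
      (Af σ₀ (J 0) y * Bf σ₁ (J 1) y).trace - (Af σ₀ (J 1) y * Bf σ₁ (J 0) y).trace := by
  have hA : ∀ i : Fin 3, mc σ₀ y (fun _ => i) = Af σ₀ i y := fun i => by rw [mc_apply]; rfl
  have hB : ∀ i : Fin 3, rmul (dzero σ₁) (fun z => (σ₁ z)⁻¹) y (fun _ => i) = Bf σ₁ i y :=
    fun i => by rw [rmul, dzero_apply]; rfl
  rw [traceF, wedge11, hA, hB, hA, hB, Matrix.trace_sub]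

lemma extDer_eta (h₀ : ContDiff ℝ (⊤ : ℕ∞) σ₀) (hi₀ : ∀ x, IsUnit (σ₀ x))
    (h₁ : ContDiff ℝ (⊤ : ℕ∞) σ₁) (hi₁ : ∀ x, IsUnit (σ₁ x)) (x : Pt 3) (I : Fin 3 → Fin 3) :
    extDer (traceF (wedge (mc σ₀) (rmul (dzero σ₁) (fun z => (σ₁ z)⁻¹)))) x I
      = ∑ σ : Equiv.Perm (Fin 3), sgnC σ *
          fderiv ℝ (fun y => (Af σ₀ (I (σ 1)) y * Bf σ₁ (I (σ 2)) y).trace) x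
            (Pi.single (I (σ 0)) 1) := by
  have hdiff : ∀ p q : Fin 3, Differentiable ℝ fun y => (Af σ₀ p y * Bf σ₁ q y).trace :=
    fun p q => (ContDiff.traceF' (ContDiff.matmul (contDiff_Af h₀ hi₀ p)
      (contDiff_Bf h₁ hi₁ q))).differentiable (by simp)
  rw [extDer, ← sum3_alt
    (fun r p q => fderiv ℝ (fun y => (Af σ₀ p y * Bf σ₁ q y).trace) x (Pi.single r 1)) I]
  refine Finset.sum_congr rfl fun j _ => ?_
  congr 1
  have hfun : (fun y => traceF (wedge (mc σ₀) (rmul (dzero σ₁) (fun z => (σ₁ z)⁻¹))) y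
      (fun i => I (j.succAbove i))) =
      fun y => (Af σ₀ (I (j.succAbove 0)) y * Bf σ₁ (I (j.succAbove 1)) y).trace
        - (Af σ₀ (I (j.succAbove 1)) y * Bf σ₁ (I (j.succAbove 0)) y).trace :=
    funext fun y => eta_eq h₀ h₁ y _
  rw [hfun, fderiv_fun_sub ((hdiff _ _) x) ((hdiff _ _) x)]
  simp

lemma extDer_eta_eval (h₀ : ContDiff ℝ (⊤ : ℕ∞) σ₀) (hi₀ : ∀ x, IsUnit (σ₀ x))
    (h₁ : ContDiff ℝ (⊤ : ℕ∞) σ₁) (hi₁ : ∀ x, IsUnit (σ₁ x)) (x : Pt 3) (I : Fin 3 → Fin 3) :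
    extDer (traceF (wedge (mc σ₀) (rmul (dzero σ₁) (fun z => (σ₁ z)⁻¹)))) x I
      = -S3 (fun i => Af σ₀ i x) (fun i => Af σ₀ i x) (fun i => Bf σ₁ i x) I
        - S3 (fun i => Af σ₀ i x) (fun i => Bf σ₁ i x) (fun i => Bf σ₁ i x) I := by
  rw [extDer_eta h₀ hi₀ h₁ hi₁]
  have hterm : ∀ σ : Equiv.Perm (Fin 3),
      sgnC σ * fderiv ℝ (fun y => (Af σ₀ (I (σ 1)) y * Bf σ₁ (I (σ 2)) y).trace) x
          (Pi.single (I (σ 0)) 1)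
        = -(sgnC σ * (Af σ₀ (I (σ 0)) x * Af σ₀ (I (σ 1)) x * Bf σ₁ (I (σ 2)) x).trace)
          + sgnC σ * (((σ₀ x)⁻¹ *
              fderiv ℝ (fun y => fderiv ℝ σ₀ y (Pi.single (I (σ 1)) 1)) x
                (Pi.single (I (σ 0)) 1)) * Bf σ₁ (I (σ 2)) x).trace
          + sgnC σ * (Af σ₀ (I (σ 1)) x *
              (fderiv ℝ (fun y => fderiv ℝ σ₁ y (Pi.single (I (σ 2)) 1)) x
                (Pi.single (I (σ 0)) 1) * (σ₁ x)⁻¹)).trace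
          - sgnC σ * (Bf σ₁ (I (σ 0)) x * Af σ₀ (I (σ 1)) x * Bf σ₁ (I (σ 2)) x).trace := by
    intro σ
    rw [fderiv_trace_AB h₀ hi₀ h₁ hi₁]
    have hrot : (Af σ₀ (I (σ 1)) x * (Bf σ₁ (I (σ 2)) x * Bf σ₁ (I (σ 0)) x)).trace
        = (Bf σ₁ (I (σ 0)) x * Af σ₀ (I (σ 1)) x * Bf σ₁ (I (σ 2)) x).trace := by
      rw [← mul_assoc, Matrix.trace_mul_comm, ← mul_assoc]
    rw [add_mul, Matrix.trace_add, neg_mul, Matrix.trace_neg, mul_sub, Matrix.trace_sub, hrot]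
    ring
  rw [Finset.sum_congr rfl fun σ _ => hterm σ]
  have split : ∀ F G H K : Equiv.Perm (Fin 3) → ℂ,
      ∑ σ : Equiv.Perm (Fin 3), (-(F σ) + G σ + H σ - K σ)
        = -(∑ σ : Equiv.Perm (Fin 3), F σ) + (∑ σ : Equiv.Perm (Fin 3), G σ)
          + (∑ σ : Equiv.Perm (Fin 3), H σ) - (∑ σ : Equiv.Perm (Fin 3), K σ) := by
    intro F G H K
    rw [Finset.sum_sub_distrib, Finset.sum_add_distrib, Finset.sum_add_distrib,
      Finset.sum_neg_distrib]
  rw [split]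
  have z1 : (∑ σ : Equiv.Perm (Fin 3), sgnC σ * (((σ₀ x)⁻¹ *
      fderiv ℝ (fun y => fderiv ℝ σ₀ y (Pi.single (I (σ 1)) 1)) x
        (Pi.single (I (σ 0)) 1)) * Bf σ₁ (I (σ 2)) x).trace) = 0 :=
    cancel_sym₁ (fun r p => (σ₀ x)⁻¹ *
      fderiv ℝ (fun y => fderiv ℝ σ₀ y (Pi.single p 1)) x (Pi.single r 1))
      (fun i => Bf σ₁ i x) I
      (fun p q => congrArg (fun z => (σ₀ x)⁻¹ * z) (snd_symm h₀ q p x))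
  have z2 : (∑ σ : Equiv.Perm (Fin 3), sgnC σ * (Af σ₀ (I (σ 1)) x *
      (fderiv ℝ (fun y => fderiv ℝ σ₁ y (Pi.single (I (σ 2)) 1)) x
        (Pi.single (I (σ 0)) 1) * (σ₁ x)⁻¹)).trace) = 0 :=
    cancel_sym₂ (fun r q =>
      fderiv ℝ (fun y => fderiv ℝ σ₁ y (Pi.single q 1)) x (Pi.single r 1) * (σ₁ x)⁻¹)
      (fun i => Af σ₀ i x) I
      (fun p q => congrArg (fun z => z * (σ₁ x)⁻¹) (snd_symm h₁ q p x))
  rw [z1, z2]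
  have e1 : (∑ σ : Equiv.Perm (Fin 3),
      sgnC σ * (Af σ₀ (I (σ 0)) x * Af σ₀ (I (σ 1)) x * Bf σ₁ (I (σ 2)) x).trace)
      = S3 (fun i => Af σ₀ i x) (fun i => Af σ₀ i x) (fun i => Bf σ₁ i x) I := rfl
  have e2 : (∑ σ : Equiv.Perm (Fin 3),
      sgnC σ * (Bf σ₁ (I (σ 0)) x * Af σ₀ (I (σ 1)) x * Bf σ₁ (I (σ 2)) x).trace)
      = S3 (fun i => Af σ₀ i x) (fun i => Bf σ₁ i x) (fun i => Bf σ₁ i x) I :=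
    S3_cyc (fun i => Bf σ₁ i x) (fun i => Af σ₀ i x) (fun i => Bf σ₁ i x) I
  rw [e1, e2]
  ring

end ctx2

end PW
namespace PW

variable {m : ℕ}
local notation "M" => Matrix (Fin m) (Fin m) ℂ

lemma S3_congr (f f' g g' h h' : Fin 3 → M) (I : Fin 3 → Fin 3)
    (hf : ∀ i, f i = f' i) (hg : ∀ i, g i = g' i) (hh : ∀ i, h i = h' i) :
    S3 f g h I = S3 f' g' h' I := by
  refine Finset.sum_congr rfl fun σ _ => ?_
  rw [hf, hg, hh]

end PW

/-- **Additivity of the 3-degree integrand**: for smooth maps `σ₀ σ₁ : ℝ³ → GL(m,ℂ)`,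
`Tr([(σ₀σ₁)⁻¹ d(σ₀σ₁)]^{∧3}) = Tr([σ₀⁻¹ dσ₀]^{∧3}) + Tr([σ₁⁻¹ dσ₁]^{∧3})
  − 3 d[Tr(σ₀⁻¹ dσ₀ ∧ dσ₁ σ₁⁻¹)]`. -/
theorem three_degree_integrand_additive {m : ℕ}
    (σ₀ σ₁ : Pt 3 → Matrix (Fin m) (Fin m) ℂ)
    (h₀ : ContDiff ℝ (⊤ : ℕ∞) σ₀) (h₁ : ContDiff ℝ (⊤ : ℕ∞) σ₁)
    (hi₀ : ∀ x, IsUnit (σ₀ x)) (hi₁ : ∀ x, IsUnit (σ₁ x)) :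
    ∀ x (I : Fin 3 → Fin 3),
      traceF (w3 (mc (fun y => σ₀ y * σ₁ y))) x I =
        traceF (w3 (mc σ₀)) x I + traceF (w3 (mc σ₁)) x I -
          3 * extDer (traceF (wedge (mc σ₀) (rmul (dzero σ₁) (fun y => (σ₁ y)⁻¹)))) x I := by
  intro x I
  have hdet₀ : IsUnit (σ₀ x).det := (Matrix.isUnit_iff_isUnit_det _).1 (hi₀ x)
  have hdet₁ : IsUnit (σ₁ x).det := (Matrix.isUnit_iff_isUnit_det _).1 (hi₁ x)
  have hu1 : σ₁ x * (σ₁ x)⁻¹ = 1 := Matrix.mul_nonsing_inv _ hdet₁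
  have hv1 : (σ₁ x)⁻¹ * σ₁ x = 1 := Matrix.nonsing_inv_mul _ hdet₁
  have hw0 : (σ₀ x)⁻¹ * σ₀ x = 1 := Matrix.nonsing_inv_mul _ hdet₀
  set a : Fin 3 → Matrix (Fin m) (Fin m) ℂ := fun i => PW.Af σ₀ i x with ha
  set b : Fin 3 → Matrix (Fin m) (Fin m) ℂ := fun i => PW.Bf σ₁ i x with hb
  -- coefficient identifications
  have hA : ∀ i : Fin 3, mc σ₀ x (fun _ => i) = a i := fun i => by
    rw [PW.mc_apply]; rfl
  have hA1 : ∀ i : Fin 3, mc σ₁ x (fun _ => i) = (σ₁ x)⁻¹ * b i * σ₁ x := fun i => by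
    rw [PW.mc_apply, hb]
    show (σ₁ x)⁻¹ * fderiv ℝ σ₁ x (Pi.single i 1)
      = (σ₁ x)⁻¹ * (fderiv ℝ σ₁ x (Pi.single i 1) * (σ₁ x)⁻¹) * σ₁ x
    simp only [mul_assoc]
    rw [hv1, mul_one]
  have hd₀x : DifferentiableAt ℝ σ₀ x :=
    ((h₀.of_le (by simp)).differentiable one_ne_zero).differentiableAt
  have hd₁x : DifferentiableAt ℝ σ₁ x :=
    ((h₁.of_le (by simp)).differentiable one_ne_zero).differentiableAt
  have hAP : ∀ i : Fin 3, mc (fun y => σ₀ y * σ₁ y) x (fun _ => i)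
      = (σ₁ x)⁻¹ * (a i + b i) * σ₁ x := fun i => by
    rw [PW.mc_apply, PW.fderiv_matmul hd₀x hd₁x, Matrix.mul_inv_rev, ha, hb]
    show (σ₁ x)⁻¹ * (σ₀ x)⁻¹ * (fderiv ℝ σ₀ x (Pi.single i 1) * σ₁ x
        + σ₀ x * fderiv ℝ σ₁ x (Pi.single i 1))
      = (σ₁ x)⁻¹ * ((σ₀ x)⁻¹ * fderiv ℝ σ₀ x (Pi.single i 1)
          + fderiv ℝ σ₁ x (Pi.single i 1) * (σ₁ x)⁻¹) * σ₁ x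
    have k0 : ∀ W : Matrix (Fin m) (Fin m) ℂ, (σ₀ x)⁻¹ * (σ₀ x * W) = W := fun W => by
      rw [← mul_assoc, hw0, one_mul]
    simp only [mul_add, add_mul, mul_assoc, k0, hv1, mul_one]
  -- main S3 identities
  have E0 : traceF (w3 (mc σ₀)) x I = PW.S3 a a a I :=
    (PW.traceF_w3 _ x I).trans (PW.S3_congr _ _ _ _ _ _ I hA hA hA)
  have E1 : traceF (w3 (mc σ₁)) x I = PW.S3 b b b I :=
    (PW.traceF_w3 _ x I).trans
      ((PW.S3_congr _ _ _ _ _ _ I hA1 hA1 hA1).trans (PW.S3_conj hu1 b b b I))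
  have EP : traceF (w3 (mc (fun y => σ₀ y * σ₁ y))) x I
      = PW.S3 a a a I + PW.S3 b b b I + 3 * PW.S3 a a b I + 3 * PW.S3 a b b I :=
    (PW.traceF_w3 _ x I).trans
      (((PW.S3_congr _ _ _ _ _ _ I hAP hAP hAP).trans
        (PW.S3_conj hu1 (fun i => a i + b i) (fun i => a i + b i) (fun i => a i + b i) I)).trans
        (PW.S3_expand_add a b I))
  have ED : extDer (traceF (wedge (mc σ₀) (rmul (dzero σ₁) (fun y => (σ₁ y)⁻¹)))) x I
      = -PW.S3 a a b I - PW.S3 a b b I := PW.extDer_eta_eval h₀ hi₀ h₁ hi₁ x I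
  rw [EP, E0, E1, ED]
  ring
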